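/- arXiv:2012.09615 — 8 statements merged into one kernel-verified Lean document; each statement's English description precedes it below -/
import Mathlib

section
/- Let w : (0, ∞) → [0, ∞) be a function and for t > 0 define the operator G(t) on functions f : ℝ → ℝ by (G(t)f)(x) = f(x + t + t·w(1/t)). Then for every t > 0, every positive integer n and every x ∈ ℝ, the n-fold composition satisfies ((G(t/n))^n f)(x) = f(x + t + t·w(n/t)); moreover, for f = sin, sup_{x ∈ ℝ} |((G(t/n))^n sin)(x) − sin(x + t)| = 2·|sin(t·w(n/t)/2)|. -/
open Real Function

theorem chernoff_transport_slow_iterate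
    (w : ℝ → ℝ) (hw : ∀ s : ℝ, 0 < s → 0 ≤ w s)
    (G : ℝ → (ℝ → ℝ) → (ℝ → ℝ))
    (hG : ∀ t : ℝ, 0 < t → ∀ (f : ℝ → ℝ) (x : ℝ),
      G t f x = f (x + t + t * w (1 / t)))
    (t : ℝ) (ht : 0 < t) (n : ℕ) (hn : 0 < n) :
    (∀ (f : ℝ → ℝ) (x : ℝ),
        (G (t / n))^[n] f x = f (x + t + t * w (n / t))) ∧
      (⨆ x : ℝ, |(G (t / n))^[n] Real.sin x - Real.sin (x + t)|)
        = 2 * |Real.sin (t * w (n / t) / 2)| := by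
  have hnR : (0:ℝ) < n := Nat.cast_pos.mpr hn
  have hs : 0 < t / n := div_pos ht hnR
  have hinv : 1 / (t / (n:ℝ)) = n / t := by
    field_simp
  -- general iterate formula
  have key : ∀ m : ℕ, ∀ (f : ℝ → ℝ) (x : ℝ),
      (G (t / n))^[m] f x = f (x + m * (t / n + (t / n) * w (n / t))) := by
    intro m
    induction m with
    | zero => intro f x; simp
    | succ m ih =>
      intro f x
      rw [Function.iterate_succ_apply, ih]
      rw [hG (t / n) hs f, hinv]
      push_cast
      ring_nf
  have hiter : ∀ (f : ℝ → ℝ) (x : ℝ),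
      (G (t / n))^[n] f x = f (x + t + t * w (n / t)) := by
    intro f x
    rw [key n f x]
    congr 1
    field_simp
    ring
  refine ⟨hiter, ?_⟩
  set c := t * w (n / t) with hc
  have hfun : ∀ x : ℝ, |(G (t / n))^[n] Real.sin x - Real.sin (x + t)|
      = 2 * |Real.sin (c / 2)| * |Real.cos (x + t + c / 2)| := by
    intro x
    rw [hiter Real.sin x]
    have : (x + t + c) - (x + t) = c := by ring
    rw [Real.sin_sub_sin]
    have h1 : (x + t + c - (x + t)) / 2 = c / 2 := by ring
    have h2 : (x + t + c + (x + t)) / 2 = x + t + c / 2 := by ring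
    rw [h1, h2, abs_mul, abs_mul]
    simp [abs_two]
  have hbdd : ∀ x : ℝ, |(G (t / n))^[n] Real.sin x - Real.sin (x + t)|
      ≤ 2 * |Real.sin (c / 2)| := by
    intro x
    rw [hfun x]
    calc 2 * |Real.sin (c / 2)| * |Real.cos (x + t + c / 2)|
        ≤ 2 * |Real.sin (c / 2)| * 1 := by
          apply mul_le_mul_of_nonneg_left (Real.abs_cos_le_one _)
          positivity
      _ = 2 * |Real.sin (c / 2)| := mul_one _
  apply le_antisymm
  · exact ciSup_le hbdd
  · have := hfun (-t - c / 2)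
    have hx : (-t - c / 2) + t + c / 2 = 0 := by ring
    rw [hx, Real.cos_zero, abs_one, mul_one] at this
    calc 2 * |Real.sin (c / 2)|
        = |(G (t / n))^[n] Real.sin (-t - c / 2) - Real.sin ((-t - c / 2) + t)| :=
          this.symm
      _ ≤ _ := le_ciSup (f := fun x => |(G (t / n))^[n] Real.sin x - Real.sin (x + t)|)
          ⟨2 * |Real.sin (c / 2)|, fun y ⟨x, hxy⟩ => hxy ▸ hbdd x⟩ (-t - c / 2)
end

section
/- Let t > 0 be fixed and let w : (0, ∞) → (0, ∞) be a function with w(s) → 0 as s → ∞. Then the ratio (sup_{x ∈ ℝ} |sin(x + t + t·w(n/t)) − sin(x + t)|) / (t·w(n/t)) tends to 1 as n → ∞. In particular, the quantity w(n/t) is O of the approximation error sup_{x ∈ ℝ} |sin(x + t + t·w(n/t)) − sin(x + t)| as n → ∞, so the convergence speed of Chernoff approximations can be arbitrarily slow. -/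
open Real Filter Asymptotics

lemma sup_abs_sin (a d : ℝ) :
    (⨆ x : ℝ, |Real.sin (x + a + d) - Real.sin (x + a)|) = 2 * |Real.sin (d / 2)| := by
  have key : ∀ x : ℝ, |Real.sin (x + a + d) - Real.sin (x + a)|
      = 2 * |Real.sin (d / 2)| * |Real.cos (x + a + d / 2)| := by
    intro x
    rw [Real.sin_sub_sin]
    rw [show (x + a + d - (x + a)) / 2 = d / 2 by ring,
        show (x + a + d + (x + a)) / 2 = x + a + d / 2 by ring]
    rw [abs_mul, abs_mul, abs_two]
  have hb : ∀ x : ℝ, |Real.sin (x + a + d) - Real.sin (x + a)| ≤ 2 * |Real.sin (d / 2)| := by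
    intro x
    rw [key x]
    calc 2 * |Real.sin (d / 2)| * |Real.cos (x + a + d / 2)|
        ≤ 2 * |Real.sin (d / 2)| * 1 := by
          apply mul_le_mul_of_nonneg_left (Real.abs_cos_le_one _) (by positivity)
      _ = 2 * |Real.sin (d / 2)| := mul_one _
  apply le_antisymm (ciSup_le hb)
  have := le_ciSup (f := fun x => |Real.sin (x + a + d) - Real.sin (x + a)|)
      ⟨2 * |Real.sin (d / 2)|, by rintro y ⟨x, rfl⟩; exact hb x⟩ (-(a + d / 2))
  refine le_trans ?_ this
  rw [key, show -(a + d / 2) + a + d / 2 = 0 by ring, Real.cos_zero, abs_one, mul_one]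

lemma sin_slope : Filter.Tendsto (fun x : ℝ => Real.sin x / x) (nhdsWithin 0 {(0:ℝ)}ᶜ) (nhds 1) := by
  have h := Real.hasDerivAt_sin 0
  rw [Real.cos_zero, hasDerivAt_iff_tendsto_slope] at h
  refine h.congr' ?_
  filter_upwards [self_mem_nhdsWithin] with x hx
  simp [slope_def_field, div_eq_mul_inv, mul_comm]

theorem chernoff_transport_slow_convergence
    (t : ℝ) (ht : 0 < t)
    (w : ℝ → ℝ) (hw : ∀ s : ℝ, 0 < s → 0 < w s)
    (hlim : Filter.Tendsto w Filter.atTop (nhds 0)) :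
    Filter.Tendsto
      (fun n : ℕ =>
        (⨆ x : ℝ, |Real.sin (x + t + t * w (n / t)) - Real.sin (x + t)|)
          / (t * w (n / t)))
      Filter.atTop (nhds 1) ∧
    (fun n : ℕ => w (n / t)) =O[Filter.atTop]
      (fun n : ℕ => ⨆ x : ℝ, |Real.sin (x + t + t * w (n / t)) - Real.sin (x + t)|) := by
  set ε : ℕ → ℝ := fun n => t * w (n / t) with hεdef
  have hεpos : ∀ᶠ n : ℕ in atTop, 0 < ε n := by
    filter_upwards [eventually_ge_atTop 1] with n hn
    have : (0:ℝ) < (n:ℝ) / t := div_pos (by exact_mod_cast hn) ht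
    exact mul_pos ht (hw _ this)
  have hnt : Tendsto (fun n : ℕ => (n:ℝ) / t) atTop atTop :=
    (tendsto_natCast_atTop_atTop).atTop_div_const ht
  have hε0 : Tendsto ε atTop (nhds 0) := by
    have := (hlim.comp hnt).const_mul t
    simpa using this
  have hf : Tendsto (fun n => ε n / 2) atTop (nhdsWithin 0 {(0:ℝ)}ᶜ) := by
    rw [tendsto_nhdsWithin_iff]
    constructor
    · simpa using hε0.div_const 2
    · filter_upwards [hεpos] with n hn
      simp only [Set.mem_compl_iff, Set.mem_singleton_iff]
      positivity
  have hg : Tendsto (fun n => Real.sin (ε n / 2) / (ε n / 2)) atTop (nhds 1) :=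
    sin_slope.comp hf
  have hga : Tendsto (fun n => |Real.sin (ε n / 2) / (ε n / 2)|) atTop (nhds 1) := by
    have := hg.abs
    simpa using this
  have key : ∀ n : ℕ, (⨆ x : ℝ, |Real.sin (x + t + t * w (n / t)) - Real.sin (x + t)|)
      = 2 * |Real.sin (ε n / 2)| := fun n => sup_abs_sin t (ε n)
  have H1 : Filter.Tendsto
      (fun n : ℕ =>
        (⨆ x : ℝ, |Real.sin (x + t + t * w (n / t)) - Real.sin (x + t)|)
          / (t * w (n / t)))
      Filter.atTop (nhds 1) := by
    refine hga.congr' ?_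
    filter_upwards [hεpos] with n hn
    rw [key n, show t * w (↑n / t) = ε n from rfl]
    rw [abs_div, abs_of_pos (by positivity : (0:ℝ) < ε n / 2)]
    rw [div_div_eq_mul_div, div_eq_div_iff (by positivity) hn.ne']
    ring
  refine ⟨H1, ?_⟩
  rw [isBigO_iff]
  refine ⟨2 / t, ?_⟩
  have hhalf : ∀ᶠ n : ℕ in atTop,
      (1:ℝ)/2 < (⨆ x : ℝ, |Real.sin (x + t + t * w (n / t)) - Real.sin (x + t)|) / (ε n) :=
    H1.eventually (eventually_gt_nhds (by norm_num : (1:ℝ)/2 < 1))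
  filter_upwards [hεpos, hhalf] with n hn hh
  set S := ⨆ x : ℝ, |Real.sin (x + t + t * w (n / t)) - Real.sin (x + t)| with hS
  have hS0 : 0 < S := by
    have := (div_pos_iff.mp (lt_trans (by norm_num) hh)).resolve_right
      (fun ⟨_, h2⟩ => absurd hn (not_lt.mpr h2.le))
    exact this.1
  have hεle : ε n ≤ 2 * S := by
    have := (div_lt_div_iff₀ (by norm_num) hn).mp hh
    linarith
  rw [Real.norm_eq_abs, Real.norm_eq_abs, abs_of_pos hS0]
  have hwpos : 0 < w (↑n / t) := by
    have hn' : 0 < t * w (↑n / t) := hn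
    rcases mul_pos_iff.mp hn' with ⟨_, h⟩ | ⟨h, _⟩
    · exact h
    · exact absurd ht (not_lt.mpr h.le)
  rw [abs_of_pos hwpos, div_mul_eq_mul_div, le_div_iff₀ ht]
  have : ε n = t * w (↑n / t) := rfl
  linarith
end

section
/- Let a > 0 and t > 0, and define the operator G(s) for s ≥ 0 on functions f : ℝ → ℝ by (G(s)f)(x) = (1/4)·f(x + 2a√s) + (1/4)·f(x − 2a√s) + (1/2)·f(x). Then for every f : ℝ → ℝ, every positive integer n, and every x ∈ ℝ, ((G(t/n))^n f)(x) = 4^{−n} · Σ_{p = −n}^{n} α_{p,n} · f(x + 2·a·p·√(t/n)), where α_{p,n} = Σ_{k = 0}^{⌊(n − |p|)/2⌋} (n choose k)·((n − k) choose (k + |p|))·2^{n − |p| − 2k}. -/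
open Real Function

/-- The coefficients `α_{p,n}` from Proposition on the first Chernoff function
for the heat equation:
`α_{p,n} = ∑_{k=0}^{⌊(n-|p|)/2⌋} (n choose k) ((n-k) choose (k+|p|)) 2^(n-|p|-2k)`. -/
def alphaCoeff (p : ℤ) (n : ℕ) : ℕ :=
  ∑ k ∈ Finset.range ((n - p.natAbs) / 2 + 1),
    Nat.choose n k * Nat.choose (n - k) (k + p.natAbs) * 2 ^ (n - p.natAbs - 2 * k)

open Polynomial in
lemma trinomial_identity (n q : ℕ) (hq : q ≤ n) :
    ∑ k ∈ Finset.range ((n - q) / 2 + 1),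
      Nat.choose n k * Nat.choose (n - k) (k + q) * 2 ^ (n - q - 2 * k)
    = Nat.choose (2 * n) (n + q) := by
  have h1 : ((X + C (1 : ℕ)) ^ (2 * n)).coeff (n + q) = Nat.choose (2 * n) (n + q) := by
    rw [Polynomial.coeff_X_add_C_pow]; simp
  have h2 : (X + C (1 : ℕ)) ^ (2 * n) = (X * (X + C 2) + 1) ^ n := by
    rw [pow_mul]
    congr 1
    simp only [map_ofNat, C_1]
    ring
  rw [h2, add_pow] at h1
  simp only [one_pow, mul_one, Polynomial.finset_sum_coeff] at h1
  have h3 : ∀ k ∈ Finset.range (n + 1),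
      ((X * (X + C 2)) ^ k * (n.choose k : ℕ[X])).coeff (n + q)
        = 2 ^ (k - (n + q - k)) * Nat.choose k (n + q - k) * n.choose k := by
    intro k hk
    rw [Finset.mem_range] at hk
    rw [← Polynomial.C_eq_natCast, Polynomial.coeff_mul_C, mul_pow,
      Polynomial.coeff_X_pow_mul', if_pos (by omega), Polynomial.coeff_X_add_C_pow]
    norm_num
  rw [Finset.sum_congr rfl h3] at h1
  rw [← Finset.sum_range_reflect] at h1
  simp only [Nat.add_sub_cancel] at h1
  rw [← h1]
  rw [Finset.sum_subset (Finset.range_subset_range.2 (by omega : (n - q) / 2 + 1 ≤ n + 1))]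
  · apply Finset.sum_congr rfl
    intro k hk
    rw [Finset.mem_range] at hk
    have e1 : n + q - (n - k) = k + q := by omega
    have e3 : n.choose (n - k) = n.choose k := Nat.choose_symm (by omega)
    rw [e1, e3]
    by_cases h : k + q ≤ n - k
    · have e2 : n - k - (k + q) = n - q - 2 * k := by omega
      rw [e2]; ring
    · have z1 : Nat.choose (n - k) (k + q) = 0 := Nat.choose_eq_zero_of_lt (by omega)
      rw [z1]; ring
  · intro k hk hk2
    rw [Finset.mem_range] at hk hk2
    push_neg at hk2
    have : Nat.choose (n - k) (k + q) = 0 := Nat.choose_eq_zero_of_lt (by omega)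
    rw [this]
    ring

lemma alphaCoeff_eq (p : ℤ) (n : ℕ) :
    alphaCoeff p n = Nat.choose (2 * n) (n + p.natAbs) := by
  by_cases h : p.natAbs ≤ n
  · exact trinomial_identity n p.natAbs h
  · push_neg at h
    unfold alphaCoeff
    have e : (n - p.natAbs) / 2 + 1 = 1 := by omega
    rw [e, Finset.sum_range_one]
    have z1 : Nat.choose (n - 0) (0 + p.natAbs) = 0 :=
      Nat.choose_eq_zero_of_lt (by omega)
    have z2 : Nat.choose (2 * n) (n + p.natAbs) = 0 :=
      Nat.choose_eq_zero_of_lt (by omega)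
    rw [z1, z2]
    ring

lemma nat_rec' (m j : ℕ) :
    (2 * m + 2).choose (m + j + 2)
      = (2 * m).choose (m + j) + (2 * m).choose (m + j + 2)
        + 2 * (2 * m).choose (m + j + 1) := by
  have h1 : (2 * m + 2).choose (m + j + 2)
      = (2 * m + 1).choose (m + j + 1) + (2 * m + 1).choose (m + j + 2) := by
    rw [show 2 * m + 2 = (2 * m + 1) + 1 by ring, show m + j + 2 = (m + j + 1) + 1 by ring]
    exact Nat.choose_succ_succ _ _
  have h2 : (2 * m + 1).choose (m + j + 1)
      = (2 * m).choose (m + j) + (2 * m).choose (m + j + 1) :=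
    Nat.choose_succ_succ _ _
  have h3 : (2 * m + 1).choose (m + j + 2)
      = (2 * m).choose (m + j + 1) + (2 * m).choose (m + j + 2) := by
    rw [show m + j + 2 = (m + j + 1) + 1 by ring]
    exact Nat.choose_succ_succ _ _
  omega

lemma nat_rec0 (m : ℕ) :
    (2 * m + 2).choose (m + 1)
      = (2 * m).choose (m + 1) + (2 * m).choose (m + 1) + 2 * (2 * m).choose m := by
  have h1 : (2 * m + 1).choose m = (2 * m + 1).choose (m + 1) := by
    rw [← Nat.choose_symm (by omega : m ≤ 2 * m + 1)]
    congr 1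
    omega
  have h2 : (2 * m + 2).choose (m + 1)
      = (2 * m + 1).choose m + (2 * m + 1).choose (m + 1) := by
    rw [show 2 * m + 2 = (2 * m + 1) + 1 by ring]
    exact Nat.choose_succ_succ _ _
  have h3 : (2 * m + 1).choose (m + 1)
      = (2 * m).choose m + (2 * m).choose (m + 1) :=
    Nat.choose_succ_succ _ _
  omega

lemma B_rec (p : ℤ) (m : ℕ) :
    Nat.choose (2 * (m + 1)) ((m + 1) + p.natAbs)
      = Nat.choose (2 * m) (m + (p - 1).natAbs)
        + Nat.choose (2 * m) (m + (p + 1).natAbs)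
        + 2 * Nat.choose (2 * m) (m + p.natAbs) := by
  rcases lt_trichotomy p 0 with h | h | h
  · obtain ⟨j, hj⟩ : ∃ j, p.natAbs = j + 1 := ⟨p.natAbs - 1, by omega⟩
    have e1 : (p - 1).natAbs = j + 2 := by omega
    have e2 : (p + 1).natAbs = j := by omega
    rw [e1, e2, hj, show 2 * (m + 1) = 2 * m + 2 by ring,
      show m + 1 + (j + 1) = m + j + 2 by ring, show m + (j + 2) = m + j + 2 by ring,
      show m + (j + 1) = m + j + 1 by ring]
    have := nat_rec' m j
    omega
  · subst h
    have e1 : ((0 : ℤ) - 1).natAbs = 1 := rfl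
    have e2 : ((0 : ℤ) + 1).natAbs = 1 := rfl
    rw [e1, e2]
    simp only [Int.natAbs_zero]
    rw [show 2 * (m + 1) = 2 * m + 2 by ring, show m + 1 + 0 = m + 1 by ring,
      show m + 0 = m by ring]
    exact nat_rec0 m
  · obtain ⟨j, hj⟩ : ∃ j, p.natAbs = j + 1 := ⟨p.natAbs - 1, by omega⟩
    have e1 : (p - 1).natAbs = j := by omega
    have e2 : (p + 1).natAbs = j + 2 := by omega
    rw [e1, e2, hj, show 2 * (m + 1) = 2 * m + 2 by ring,
      show m + 1 + (j + 1) = m + j + 2 by ring, show m + (j + 2) = m + j + 2 by ring,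
      show m + (j + 1) = m + j + 1 by ring]
    have := nat_rec' m j
    omega

lemma iter_formula (c : ℝ) (T : (ℝ → ℝ) → (ℝ → ℝ))
    (hT : ∀ f x, T f x = (1 / 4) * f (x + c) + (1 / 4) * f (x - c) + (1 / 2) * f x)
    (f : ℝ → ℝ) (m : ℕ) (x : ℝ) :
    T^[m] f x = (1 / 4 ^ m) * ∑ p ∈ Finset.Icc (-(m : ℤ)) (m : ℤ),
      ((Nat.choose (2 * m) (m + p.natAbs) : ℝ)) * f (x + c * p) := by
  induction m generalizing x with
  | zero => simp
  | succ m ih =>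
    have shift : ∀ (d : ℤ) (g : ℤ → ℝ),
        ∑ p ∈ Finset.Icc (-(m : ℤ)) (m : ℤ), g (p + d)
          = ∑ p ∈ Finset.Icc (-(m : ℤ) + d) ((m : ℤ) + d), g p := by
      intro d g
      rw [← Finset.map_add_right_Icc, Finset.sum_map]
      simp
    have hzero : ∀ q : ℤ, m < q.natAbs → ((2 * m).choose (m + q.natAbs) : ℝ) = 0 := by
      intro q hq
      norm_cast
      exact Nat.choose_eq_zero_of_lt (by omega)
    rw [Function.iterate_succ_apply', hT, ih, ih, ih]
    have hplus : ∑ p ∈ Finset.Icc (-(m : ℤ)) (m : ℤ),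
          ((2 * m).choose (m + p.natAbs) : ℝ) * f (x + c + c * p)
        = ∑ p ∈ Finset.Icc (-(m : ℤ) - 1) ((m : ℤ) + 1),
          ((2 * m).choose (m + (p - 1).natAbs) : ℝ) * f (x + c * p) := by
      have step : ∑ p ∈ Finset.Icc (-(m : ℤ)) (m : ℤ),
            ((2 * m).choose (m + p.natAbs) : ℝ) * f (x + c + c * p)
          = ∑ p ∈ Finset.Icc (-(m : ℤ) + 1) ((m : ℤ) + 1),
            ((2 * m).choose (m + (p - 1).natAbs) : ℝ) * f (x + c * p) := by
        rw [← shift 1 (fun p => ((2 * m).choose (m + (p - 1).natAbs) : ℝ) * f (x + c * p))]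
        apply Finset.sum_congr rfl
        intro p _
        simp only [add_sub_cancel_right]
        congr 2
        push_cast
        ring
      rw [step]
      apply Finset.sum_subset (Finset.Icc_subset_Icc (by omega) le_rfl)
      intro p hp hp2
      rw [Finset.mem_Icc] at hp
      simp only [Finset.mem_Icc, not_and, not_le] at hp2
      have : ((2 * m).choose (m + (p - 1).natAbs) : ℝ) = 0 := hzero _ (by omega)
      rw [this, zero_mul]
    have hminus : ∑ p ∈ Finset.Icc (-(m : ℤ)) (m : ℤ),
          ((2 * m).choose (m + p.natAbs) : ℝ) * f (x - c + c * p)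
        = ∑ p ∈ Finset.Icc (-(m : ℤ) - 1) ((m : ℤ) + 1),
          ((2 * m).choose (m + (p + 1).natAbs) : ℝ) * f (x + c * p) := by
      have step : ∑ p ∈ Finset.Icc (-(m : ℤ)) (m : ℤ),
            ((2 * m).choose (m + p.natAbs) : ℝ) * f (x - c + c * p)
          = ∑ p ∈ Finset.Icc (-(m : ℤ) - 1) ((m : ℤ) - 1),
            ((2 * m).choose (m + (p + 1).natAbs) : ℝ) * f (x + c * p) := by
        have := shift (-1) (fun p => ((2 * m).choose (m + (p + 1).natAbs) : ℝ) * f (x + c * p))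
        rw [show -(m : ℤ) + -1 = -(m : ℤ) - 1 by ring, show (m : ℤ) + -1 = (m : ℤ) - 1 by ring] at this
        rw [← this]
        apply Finset.sum_congr rfl
        intro p _
        simp only [neg_add_cancel_right, add_neg_cancel_right]
        congr 2
        push_cast
        ring
      rw [step]
      apply Finset.sum_subset (Finset.Icc_subset_Icc le_rfl (by omega))
      intro p hp hp2
      rw [Finset.mem_Icc] at hp
      simp only [Finset.mem_Icc, not_and, not_le] at hp2
      have : ((2 * m).choose (m + (p + 1).natAbs) : ℝ) = 0 := hzero _ (by omega)
      rw [this, zero_mul]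
    have hmid : ∑ p ∈ Finset.Icc (-(m : ℤ)) (m : ℤ),
          ((2 * m).choose (m + p.natAbs) : ℝ) * f (x + c * p)
        = ∑ p ∈ Finset.Icc (-(m : ℤ) - 1) ((m : ℤ) + 1),
          ((2 * m).choose (m + p.natAbs) : ℝ) * f (x + c * p) := by
      apply Finset.sum_subset (Finset.Icc_subset_Icc (by omega) (by omega))
      intro p hp hp2
      rw [Finset.mem_Icc] at hp
      simp only [Finset.mem_Icc, not_and, not_le] at hp2
      have : ((2 * m).choose (m + p.natAbs) : ℝ) = 0 := hzero _ (by omega)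
      rw [this, zero_mul]
    rw [hplus, hminus, hmid]
    have hset : Finset.Icc (-(↑(m + 1) : ℤ)) (↑(m + 1) : ℤ)
        = Finset.Icc (-(m : ℤ) - 1) ((m : ℤ) + 1) := by
      congr 1 <;> push_cast <;> ring
    have hRHS : ∑ p ∈ Finset.Icc (-(m : ℤ) - 1) ((m : ℤ) + 1),
          ((2 * (m + 1)).choose ((m + 1) + p.natAbs) : ℝ) * f (x + c * p)
        = (∑ p ∈ Finset.Icc (-(m : ℤ) - 1) ((m : ℤ) + 1),
            ((2 * m).choose (m + (p - 1).natAbs) : ℝ) * f (x + c * p))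
          + (∑ p ∈ Finset.Icc (-(m : ℤ) - 1) ((m : ℤ) + 1),
            ((2 * m).choose (m + (p + 1).natAbs) : ℝ) * f (x + c * p))
          + 2 * (∑ p ∈ Finset.Icc (-(m : ℤ) - 1) ((m : ℤ) + 1),
            ((2 * m).choose (m + p.natAbs) : ℝ) * f (x + c * p)) := by
      rw [Finset.mul_sum, ← Finset.sum_add_distrib, ← Finset.sum_add_distrib]
      apply Finset.sum_congr rfl
      intro p _
      rw [B_rec p m]
      push_cast
      ring
    rw [hset, hRHS]
    ring

theorem chernoff_heat_first_iterate
    (a t : ℝ) (ha : 0 < a) (ht : 0 < t)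
    (G : ℝ → (ℝ → ℝ) → (ℝ → ℝ))
    (hG : ∀ s : ℝ, 0 ≤ s → ∀ (f : ℝ → ℝ) (x : ℝ),
      G s f x = (1 / 4) * f (x + 2 * a * Real.sqrt s)
        + (1 / 4) * f (x - 2 * a * Real.sqrt s) + (1 / 2) * f x)
    (f : ℝ → ℝ) (n : ℕ) (hn : 0 < n) (x : ℝ) :
    (G (t / n))^[n] f x
      = (1 / 4 ^ n) * ∑ p ∈ Finset.Icc (-(n : ℤ)) (n : ℤ),
          (alphaCoeff p n : ℝ) * f (x + 2 * a * (p : ℝ) * Real.sqrt (t / n)) := by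
  have hs : (0 : ℝ) ≤ t / n := div_nonneg ht.le (Nat.cast_nonneg n)
  have key := iter_formula (2 * a * Real.sqrt (t / n)) (G (t / n))
    (fun f x => hG (t / n) hs f x) f n x
  rw [key]
  apply congrArg
  apply Finset.sum_congr rfl
  intro p _
  rw [alphaCoeff_eq]
  congr 2
  ring
end

section
/- Let a > 0 and t > 0, and define the operator G(s) for s ≥ 0 on functions f : ℝ → ℝ by (G(s)f)(x) = (1/6)·f(x + a√(6s)) + (1/6)·f(x − a√(6s)) + (2/3)·f(x). Then for every f : ℝ → ℝ, every positive integer n, and every x ∈ ℝ, ((G(t/n))^n f)(x) = 6^{−n} · Σ_{p = −n}^{n} β_{p,n} · f(x + a·p·√(6t/n)), where β_{p,n} = Σ_{k = 0}^{⌊(n − |p|)/2⌋} (n choose k)·((n − k) choose (k + |p|))·4^{n − |p| − 2k}. -/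
/-!
Let `τ` be translation by `h = a √(6t/n)`. Then `τ ∘ G(t/n) = (τ² + 4τ + 1)/6`, and `τ` commutes
with `G(t/n)`, so `τⁿ ∘ G(t/n)ⁿ = (τ² + 4τ + 1)ⁿ/6ⁿ`. Writing `τ² + 4τ + 1 = 1 + τ(τ + 4)` and
expanding twice by the binomial theorem, the coefficient of `τ^(n+q)` is `β_{q,n}`; the polynomial
is palindromic, so the coefficient of `τ^(n-q)` is the same.
-/

open Real Function

/-- The coefficients `β_{p,n}` from Proposition on the second Chernoff function
for the heat equation:
`β_{p,n} = ∑_{k=0}^{⌊(n-|p|)/2⌋} (n choose k) ((n-k) choose (k+|p|)) 4^(n-|p|-2k)`. -/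
def betaCoeff (p : ℤ) (n : ℕ) : ℕ :=
  ∑ k ∈ Finset.range ((n - p.natAbs) / 2 + 1),
    Nat.choose n k * Nat.choose (n - k) (k + p.natAbs) * 4 ^ (n - p.natAbs - 2 * k)

open Polynomial

theorem Polynomial.reflect_pow {R : Type*} [Semiring R] {p : R[X]} {N : ℕ}
    (hp : p.natDegree ≤ N) (m : ℕ) : reflect (N * m) (p ^ m) = reflect N p ^ m := by
  induction m with
  | zero => simp
  | succ m ih =>
    have hpm : (p ^ m).natDegree ≤ N * m := mul_comm m N ▸ natDegree_pow_le_of_le m hp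
    rw [pow_succ, pow_succ, Nat.mul_succ, reflect_mul _ _ hpm hp, ih]

namespace ChernoffHeat

theorem sum_range_eq_sum_Icc_sub {M : Type*} [AddCommMonoid M] (n : ℕ) (φ : ℤ → M) :
    ∑ i ∈ Finset.range (2 * n + 1), φ (i - n) = ∑ p ∈ Finset.Icc (-n : ℤ) n, φ p := by
  refine Finset.sum_nbij' (fun i => (i : ℤ) - n) (fun p => (p + n).toNat) ?_ ?_ ?_ ?_ ?_ <;>
    intros <;> simp_all <;> omega

section Translate

variable {A R M : Type*} [AddCommMonoid A] [Semiring R] [AddCommMonoid M] [Module R M]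

variable (R M) in
def translate (a : A) : Module.End R (A → M) := LinearMap.funLeft R M (· + a)

@[simp]
theorem translate_apply (a : A) (g : A → M) (x : A) : translate R M a g x = g (x + a) := rfl

theorem translate_add (a b : A) :
    translate R M (a + b) = translate R M a * translate R M b := by
  ext g x
  simp [add_assoc, add_comm a b]

theorem translate_zero : translate R M (0 : A) = 1 := by
  ext g x
  simp

theorem translate_pow (a : A) (k : ℕ) : translate R M a ^ k = translate R M (k • a) := by
  induction k with
  | zero => simp [translate_zero]
  | succ k ih => rw [pow_succ, ih, succ_nsmul, translate_add]

theorem commute_translate (a b : A) : Commute (translate R M a) (translate R M b) := by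
  rw [Commute, SemiconjBy, ← translate_add, ← translate_add, add_comm]

theorem aeval_translate_apply (a : A) (Q : ℕ[X]) {N : ℕ} (hQ : Q.natDegree < N)
    (g : A → M) (x : A) :
    aeval (translate R M a) Q g x = ∑ i ∈ Finset.range N, Q.coeff i • g (x + i • a) := by
  simp [aeval_eq_sum_range' hQ, translate_pow, LinearMap.sum_apply, Finset.sum_apply]

end Translate

noncomputable def stepPoly : ℕ[X] := X ^ 2 + C 4 * X + 1

theorem natDegree_stepPoly_le : stepPoly.natDegree ≤ 2 := by
  unfold stepPoly; compute_degree

theorem reflect_stepPoly : reflect 2 stepPoly = stepPoly := by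
  have h : reflect 2 (X : ℕ[X]) = X := by simpa using reflect_monomial (R := ℕ) 2 1
  rw [stepPoly, reflect_add, reflect_add, reflect_C_mul, h, reflect_monomial, reflect_one,
    revAt_le le_rfl]
  ring

theorem coeff_stepPoly_pow_add (n q : ℕ) :
    (stepPoly ^ n).coeff (n + q) = betaCoeff q n := by
  have hpoly : stepPoly = 1 + X * (X + C 4) := by rw [stepPoly]; ring
  have hterm : ∀ k ∈ Finset.range (n + 1),
      (1 ^ k * (X * (X + C 4)) ^ (n - k) * (n.choose k : ℕ[X])).coeff (n + q)
        = n.choose k * (n - k).choose (k + q) * 4 ^ (n - q - 2 * k) := by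
    intro k hk
    rw [Finset.mem_range] at hk
    rw [one_pow, one_mul, coeff_mul_natCast, mul_pow, coeff_X_pow_mul', if_pos (by omega),
      coeff_X_add_C_pow, show n + q - (n - k) = k + q by omega,
      show n - k - (k + q) = n - q - 2 * k by omega, Nat.cast_id, Nat.cast_id]
    ring
  rw [hpoly, add_pow, finsetSum_coeff, Finset.sum_congr rfl hterm, betaCoeff]
  refine (Finset.sum_subset (Finset.range_subset_range.2 (by omega)) fun k hk hk' => ?_).symm
  simp only [Finset.mem_range, Int.natAbs_natCast] at hk hk'
  simp [Nat.choose_eq_zero_of_lt (show n - k < k + q by omega)]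

theorem coeff_stepPoly_pow_sub {n q : ℕ} (hq : q ≤ n) :
    (stepPoly ^ n).coeff (n - q) = (stepPoly ^ n).coeff (n + q) := by
  have hsymm := reflect_pow natDegree_stepPoly_le n
  rw [reflect_stepPoly] at hsymm
  conv_lhs => rw [← hsymm, coeff_reflect, revAt_le (by omega)]
  congr 1
  omega

theorem coeff_stepPoly_pow {n i : ℕ} (hi : i ≤ 2 * n) :
    (stepPoly ^ n).coeff i = betaCoeff (i - n) n := by
  rcases le_total n i with h | h
  · obtain ⟨q, rfl⟩ := Nat.exists_eq_add_of_le h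
    rw [coeff_stepPoly_pow_add]
    congr 1
    push_cast
    ring
  · obtain ⟨q, hq, rfl⟩ : ∃ q ≤ n, i = n - q := ⟨n - i, by omega, by omega⟩
    rw [coeff_stepPoly_pow_sub hq, coeff_stepPoly_pow_add, betaCoeff, betaCoeff,
      Int.natAbs_natCast, show (((n - q : ℕ) : ℤ) - n).natAbs = q by omega]

noncomputable def chernoffStep (h : ℝ) : Module.End ℝ (ℝ → ℝ) :=
  (6 : ℝ)⁻¹ • (translate ℝ ℝ h + translate ℝ ℝ (-h) + (4 : ℝ) • 1)

theorem chernoffStep_apply (h : ℝ) (g : ℝ → ℝ) (x : ℝ) :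
    chernoffStep h g x = 1 / 6 * g (x + h) + 1 / 6 * g (x - h) + 2 / 3 * g x := by
  simp [chernoffStep, sub_eq_add_neg]
  ring

theorem translate_mul_chernoffStep (h : ℝ) :
    translate ℝ ℝ h * chernoffStep h = (6 : ℝ)⁻¹ • aeval (translate ℝ ℝ h) stepPoly := by
  simp only [chernoffStep, stepPoly, mul_smul_comm, mul_add, mul_one, ← translate_add,
    add_neg_cancel, translate_zero, map_add, map_pow, map_mul, aeval_X, aeval_C, map_one]
  rw [translate_pow, two_nsmul, map_ofNat, ofNat_smul_eq_nsmul (R := ℝ), nsmul_eq_mul,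
    Nat.cast_ofNat, add_right_comm]

theorem commute_translate_chernoffStep (h : ℝ) :
    Commute (translate ℝ ℝ h) (chernoffStep h) :=
  (((commute_translate h h).add_right (commute_translate h (-h))).add_right
    ((Commute.one_right _).smul_right _)).smul_right _

theorem chernoffStep_pow_apply (h : ℝ) (n : ℕ) (g : ℝ → ℝ) (x : ℝ) :
    (chernoffStep h ^ n) g x
      = (6 ^ n)⁻¹ * ∑ p ∈ Finset.Icc (-n : ℤ) n, (betaCoeff p n : ℝ) * g (x + p * h) := by
  have hpow : translate ℝ ℝ h ^ n * chernoffStep h ^ n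
      = (6 ^ n : ℝ)⁻¹ • aeval (translate ℝ ℝ h) (stepPoly ^ n) := by
    rw [← (commute_translate_chernoffStep h).mul_pow, translate_mul_chernoffStep, _root_.smul_pow,
      map_pow, inv_pow]
  have hdeg : (stepPoly ^ n).natDegree < 2 * n + 1 :=
    Nat.lt_succ_of_le (mul_comm n 2 ▸ natDegree_pow_le_of_le n natDegree_stepPoly_le)
  calc (chernoffStep h ^ n) g x
      = (translate ℝ ℝ h ^ n * chernoffStep h ^ n) g (x - n * h) := by
        simp [translate_pow]
    _ = (6 ^ n)⁻¹ * ∑ i ∈ Finset.range (2 * n + 1),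
          (betaCoeff ((i : ℤ) - n) n : ℝ) * g (x + ((i : ℤ) - n : ℤ) * h) := by
        rw [hpow, LinearMap.smul_apply, Pi.smul_apply, aeval_translate_apply _ _ hdeg,
          smul_eq_mul]
        congr 1
        refine Finset.sum_congr rfl fun i hi => ?_
        rw [coeff_stepPoly_pow (by simp at hi; omega), nsmul_eq_mul]
        congr 2
        push_cast
        ring
    _ = _ := by rw [sum_range_eq_sum_Icc_sub n fun p => (betaCoeff p n : ℝ) * g (x + p * h)]

end ChernoffHeat

theorem chernoff_heat_second_iterate_general
    (a t : ℝ) (ht : 0 < t)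
    (G : ℝ → (ℝ → ℝ) → (ℝ → ℝ))
    (hG : ∀ s : ℝ, 0 ≤ s → ∀ (f : ℝ → ℝ) (x : ℝ),
      G s f x = (1 / 6) * f (x + a * Real.sqrt (6 * s))
        + (1 / 6) * f (x - a * Real.sqrt (6 * s)) + (2 / 3) * f x)
    (f : ℝ → ℝ) (n : ℕ) (x : ℝ) :
    (G (t / n))^[n] f x
      = (1 / 6 ^ n) * ∑ p ∈ Finset.Icc (-(n : ℤ)) (n : ℤ),
          (betaCoeff p n : ℝ) * f (x + a * (p : ℝ) * Real.sqrt (6 * t / n)) := by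
  have hstep : G (t / n) = ChernoffHeat.chernoffStep (a * √(6 * (t / n))) := by
    funext g y
    rw [hG _ (div_nonneg ht.le n.cast_nonneg), ChernoffHeat.chernoffStep_apply]
  rw [hstep, ← Module.End.coe_pow, ChernoffHeat.chernoffStep_pow_apply, one_div, mul_div_assoc]
  congr 1
  refine Finset.sum_congr rfl fun p _ => ?_
  congr 2
  ring

theorem chernoff_heat_second_iterate
    (a t : ℝ) (ha : 0 < a) (ht : 0 < t)
    (G : ℝ → (ℝ → ℝ) → (ℝ → ℝ))
    (hG : ∀ s : ℝ, 0 ≤ s → ∀ (f : ℝ → ℝ) (x : ℝ),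
      G s f x = (1 / 6) * f (x + a * Real.sqrt (6 * s))
        + (1 / 6) * f (x - a * Real.sqrt (6 * s)) + (2 / 3) * f x)
    (f : ℝ → ℝ) (n : ℕ) (hn : 0 < n) (x : ℝ) :
    (G (t / n))^[n] f x
      = (1 / 6 ^ n) * ∑ p ∈ Finset.Icc (-(n : ℤ)) (n : ℤ),
          (betaCoeff p n : ℝ) * f (x + a * (p : ℝ) * Real.sqrt (6 * t / n)) :=
  chernoff_heat_second_iterate_general a t ht G hG f n x
end

section
/- Let a > 0 and t > 0. Then there exists a constant C ≥ 0 such that for every positive integer n, |(cos(a·√(t/n)))^{2n} − e^{−a²t}| ≤ C/n. Equivalently, sup_{x ∈ ℝ} |(cos(a·√(t/n)))^{2n}·sin(x) − e^{−a²t}·sin(x)| is O(1/n) as n → ∞. -/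
open Real

private lemma aux_pow_sub (x y : ℝ) (hx : |x| ≤ 1) (hy : |y| ≤ 1) :
    ∀ m : ℕ, |x ^ m - y ^ m| ≤ m * |x - y| := by
  intro m
  induction m with
  | zero => simp
  | succ k ih =>
    have h1 : x ^ (k+1) - y ^ (k+1) = x * (x ^ k - y ^ k) + (x - y) * y ^ k := by ring
    have hyk : |y ^ k| ≤ 1 := by
      rw [abs_pow]; exact pow_le_one₀ (abs_nonneg _) hy
    calc |x ^ (k+1) - y ^ (k+1)| ≤ |x * (x ^ k - y ^ k)| + |(x - y) * y ^ k| := by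
          rw [h1]; exact abs_add_le _ _
      _ = |x| * |x ^ k - y ^ k| + |x - y| * |y ^ k| := by rw [abs_mul, abs_mul]
      _ ≤ (k + 1 : ℕ) * |x - y| := by
          have t1 : |x| * |x ^ k - y ^ k| ≤ 1 * (k * |x - y|) :=
            mul_le_mul hx ih (abs_nonneg _) zero_le_one
          have t2 : |x - y| * |y ^ k| ≤ |x - y| * 1 :=
            mul_le_mul_of_nonneg_left hyk (abs_nonneg _)
          push_cast
          nlinarith

private lemma aux_exp_lin (x : ℝ) (hx : 0 ≤ x) :
    |Real.exp (-x) - (1 - x)| ≤ x ^ 2 := by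
  have h1 : 1 + x ≤ Real.exp x := by linarith [Real.add_one_le_exp x]
  have h2 : 1 + (-x) ≤ Real.exp (-x) := by
    have := Real.add_one_le_exp (-x); linarith
  have hmul : Real.exp (-x) * Real.exp x = 1 := by
    rw [← Real.exp_add]; simp
  have hpos : 0 < Real.exp (-x) := Real.exp_pos _
  rw [abs_le]
  constructor
  · nlinarith
  · nlinarith [sq_nonneg x, sq_nonneg (x - 1)]

private lemma aux_cos_exp (s : ℝ) (hs : |s| ≤ 1) :
    |Real.cos s - Real.exp (-(s ^ 2 / 2))| ≤ s ^ 4 := by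
  have h1 : |Real.cos s - (1 - s ^ 2 / 2)| ≤ |s| ^ 4 * (5 / 96) := Real.cos_bound hs
  have h2 : |(1 - s ^ 2 / 2) - Real.exp (-(s ^ 2 / 2))| ≤ (s ^ 2 / 2) ^ 2 := by
    rw [abs_sub_comm]; exact aux_exp_lin (s ^ 2 / 2) (by positivity)
  have habs : |s| ^ 4 = s ^ 4 := by
    rw [← abs_pow]; exact abs_of_nonneg (by positivity)
  calc |Real.cos s - Real.exp (-(s ^ 2 / 2))|
      ≤ |Real.cos s - (1 - s ^ 2 / 2)| + |(1 - s ^ 2 / 2) - Real.exp (-(s ^ 2 / 2))| :=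
        abs_sub_le _ _ _
    _ ≤ s ^ 4 * (5 / 96) + (s ^ 2 / 2) ^ 2 := by rw [← habs]; exact add_le_add h1 h2
    _ ≤ s ^ 4 := by nlinarith [sq_nonneg (s ^ 2)]

theorem chernoff_heat_first_sin_rate (a t : ℝ) (ha : 0 < a) (ht : 0 < t) :
    ∃ C : ℝ, 0 ≤ C ∧ ∀ n : ℕ, 0 < n →
      |Real.cos (a * Real.sqrt (t / n)) ^ (2 * n) - Real.exp (-(a ^ 2) * t)|
        ≤ C / n := by
  refine ⟨2 * a ^ 4 * t ^ 2 + 2 * (a ^ 2 * t + 1), by positivity, ?_⟩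
  intro n hn
  set s := a * Real.sqrt (t / n) with hs_def
  have hnR : (0 : ℝ) < n := by exact_mod_cast hn
  have hs2 : s ^ 2 = a ^ 2 * (t / n) := by
    rw [hs_def, mul_pow, Real.sq_sqrt (by positivity)]
  have hsnn : 0 ≤ s := by positivity
  have hexp_pow : (Real.exp (-(s ^ 2 / 2))) ^ (2 * n) = Real.exp (-(a ^ 2) * t) := by
    rw [← Real.exp_nat_mul]
    congr 1
    push_cast
    rw [hs2]
    field_simp
  by_cases hcase : a ^ 2 * t ≤ n
  · have hsq : s ^ 2 ≤ 1 := by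
      rw [hs2, ← mul_div_assoc, div_le_one hnR]; exact hcase
    have hs1 : |s| ≤ 1 := by
      rw [abs_of_nonneg hsnn]
      nlinarith [hsq, hsnn]
    have hcos1 : |Real.cos s| ≤ 1 := Real.abs_cos_le_one s
    have hexp1 : |Real.exp (-(s ^ 2 / 2))| ≤ 1 := by
      rw [abs_of_pos (Real.exp_pos _)]
      exact Real.exp_le_one_iff.mpr (by nlinarith [sq_nonneg s])
    have key := aux_pow_sub (Real.cos s) (Real.exp (-(s ^ 2 / 2))) hcos1 hexp1 (2 * n)
    rw [hexp_pow] at key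
    have hbound := aux_cos_exp s hs1
    calc |Real.cos s ^ (2 * n) - Real.exp (-(a ^ 2) * t)|
        ≤ ((2 * n : ℕ) : ℝ) * |Real.cos s - Real.exp (-(s ^ 2 / 2))| := key
      _ ≤ ((2 * n : ℕ) : ℝ) * s ^ 4 := by gcongr
      _ = 2 * a ^ 4 * t ^ 2 / n ^ 2 * n := by
          push_cast
          have h4 : s ^ 4 = (a ^ 2 * (t / n)) ^ 2 := by rw [← hs2]; ring
          rw [h4]; field_simp
      _ ≤ (2 * a ^ 4 * t ^ 2 + 2 * (a ^ 2 * t + 1)) / n := by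
          rw [div_mul_eq_mul_div, div_le_div_iff₀ (by positivity) hnR]
          have hpos2 : 0 ≤ 2 * (a ^ 2 * t + 1) * (n:ℝ) ^ 2 := by positivity
          nlinarith
  · push_neg at hcase
    have hA := abs_le.1 (by
      rw [abs_pow]; exact pow_le_one₀ (abs_nonneg _) (Real.abs_cos_le_one s) :
      |Real.cos s ^ (2 * n)| ≤ 1)
    have hB : 0 < Real.exp (-(a ^ 2) * t) := Real.exp_pos _
    have hB1 : Real.exp (-(a ^ 2) * t) ≤ 1 := Real.exp_le_one_iff.mpr (by nlinarith)
    rw [abs_le]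
    constructor
    · rw [neg_le, neg_sub, sub_le_iff_le_add]
      have h2 : (2 : ℝ) ≤ (2 * a ^ 4 * t ^ 2 + 2 * (a ^ 2 * t + 1)) / n := by
        rw [le_div_iff₀ hnR]; nlinarith
      linarith [hA.2, hA.1]
    · have h2 : (2 : ℝ) ≤ (2 * a ^ 4 * t ^ 2 + 2 * (a ^ 2 * t + 1)) / n := by
        rw [le_div_iff₀ hnR]; nlinarith
      linarith [hA.2, hA.1]
end

section
/- Let a > 0 and t > 0, and define the operator G(s) for s ≥ 0 on functions f : ℝ → ℝ by (G(s)f)(x) = (1/6)·f(x + a√(6s)) + (1/6)·f(x − a√(6s)) + (2/3)·f(x). Then for every positive integer n and every x ∈ ℝ, ((G(t/n))^n sin)(x) = 3^{−n}·(2 + cos(a·√(6t/n)))^{n}·sin(x). -/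
open Real Function

theorem chernoff_heat_second_iterate_sin
    (a t : ℝ) (ha : 0 < a) (ht : 0 < t)
    (G : ℝ → (ℝ → ℝ) → (ℝ → ℝ))
    (hG : ∀ s : ℝ, 0 ≤ s → ∀ (f : ℝ → ℝ) (x : ℝ),
      G s f x = (1 / 6) * f (x + a * Real.sqrt (6 * s))
        + (1 / 6) * f (x - a * Real.sqrt (6 * s)) + (2 / 3) * f x)
    (n : ℕ) (hn : 0 < n) (x : ℝ) :
    (G (t / n))^[n] Real.sin x
      = (1 / 3 ^ n) * (2 + Real.cos (a * Real.sqrt (6 * t / n))) ^ n * Real.sin x := by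
  have hs : (0:ℝ) ≤ t / n := le_of_lt (div_pos ht (by exact_mod_cast hn))
  have harg : 6 * (t / n) = 6 * t / n := by ring
  set c : ℝ := (2 + Real.cos (a * Real.sqrt (6 * t / n))) / 3 with hc
  have key : ∀ m : ℕ, (G (t / n))^[m] Real.sin = fun y => c ^ m * Real.sin y := by
    intro m
    induction m with
    | zero => funext y; simp
    | succ k ih =>
      funext y
      rw [Function.iterate_succ_apply', ih, hG _ hs]
      rw [Real.sin_add, Real.sin_sub]
      rw [hc, harg]
      ring
  rw [key n]
  rw [hc]
  rw [div_pow]; ring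
end

section
/- Let a > 0 and t > 0. Then there exists a constant C ≥ 0 such that for every positive integer n, |3^{−n}·(2 + cos(a·√(6t/n)))^{n} − e^{−a²t}| ≤ C/n². -/
/-!
With `x = a √(6t/n)`, the one-step factor `p = (2 + cos x) / 3` and `q = exp (-x² / 6)` satisfy
`qⁿ = exp (-a² t)`, and both have the Taylor expansion `1 - x² / 6 + x⁴ / 72 + O(x⁶)`, so
`|p - q| ≤ x⁶` (trivially so when `|x| > 1`, as `p, q ∈ [0, 1]`). Since `|p|, |q| ≤ 1`,
`|pⁿ - qⁿ| ≤ n |p - q| ≤ n x⁶ = 216 (a² t)³ / n²`.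
-/

open Real

theorem Real.abs_cos_sub_taylor_four_le {x : ℝ} (hx : |x| ≤ 1) :
    |cos x - (1 - x ^ 2 / 2 + x ^ 4 / 24)| ≤ |x| ^ 6 * (7 / 4320) := by
  set r := Complex.exp (x * Complex.I) -
    ∑ m ∈ Finset.range 6, ((x : ℂ) * Complex.I) ^ m / m.factorial
  have hre : cos x - (1 - x ^ 2 / 2 + x ^ 4 / 24) = r.re := by
    simp [r, Complex.exp_ofReal_mul_I_re, Finset.sum_range_succ, Nat.factorial, mul_pow, pow_succ]
    ring
  calc |cos x - (1 - x ^ 2 / 2 + x ^ 4 / 24)| ≤ ‖r‖ := hre ▸ Complex.abs_re_le_norm r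
    _ ≤ ‖(x : ℂ) * Complex.I‖ ^ 6 * (Nat.succ 6 * (Nat.factorial 6 * (6 : ℕ) : ℝ)⁻¹) :=
      Complex.exp_bound (by simpa using hx) (by norm_num)
    _ = |x| ^ 6 * (7 / 4320) := by norm_num [Nat.factorial]

theorem abs_two_add_cos_div_three_sub_exp_le (x : ℝ) :
    |(2 + cos x) / 3 - exp (-(x ^ 2 / 6))| ≤ x ^ 6 := by
  have hx6 : 0 ≤ x ^ 6 := by positivity
  rcases le_or_gt |x| 1 with hx | hx
  · have hu : |-(x ^ 2 / 6)| ≤ 1 := by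
      rw [abs_neg, abs_of_nonneg (by positivity : (0 : ℝ) ≤ x ^ 2 / 6)]
      nlinarith [sq_abs x, abs_nonneg x]
    have hexp := Real.exp_bound hu (n := 3) (by norm_num)
    rw [abs_neg, abs_of_nonneg (by positivity : (0 : ℝ) ≤ x ^ 2 / 6)] at hexp
    norm_num [Finset.sum_range_succ, Nat.factorial] at hexp
    have hcos := abs_cos_sub_taylor_four_le hx
    rw [Even.pow_abs (by decide)] at hcos
    rw [abs_le] at hexp hcos ⊢
    constructor <;> linarith [hexp.1, hexp.2, hcos.1, hcos.2]
  · have hx6_ge : 1 ≤ x ^ 6 := by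
      rw [← Even.pow_abs (by decide)]; exact one_le_pow₀ hx.le
    have hq : exp (-(x ^ 2 / 6)) ≤ 1 := exp_le_one_iff.mpr (by nlinarith [sq_nonneg x])
    rw [abs_le]
    constructor <;> linarith [neg_one_le_cos x, cos_le_one x, exp_pos (-(x ^ 2 / 6))]

theorem abs_pow_sub_pow_le_of_abs_le_one {α : Type*} [CommRing α] [LinearOrder α]
    [IsOrderedRing α] {p q : α} (hp : |p| ≤ 1) (hq : |q| ≤ 1) (n : ℕ) :
    |p ^ n - q ^ n| ≤ n * |p - q| :=
  calc |p ^ n - q ^ n| ≤ |p - q| * n * max |p| |q| ^ (n - 1) := abs_pow_sub_pow_le ..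
    _ ≤ |p - q| * n * 1 := by gcongr; exact pow_le_one₀ (by positivity) (max_le hp hq)
    _ = n * |p - q| := by rw [mul_one, mul_comm]

theorem abs_two_add_cos_div_three_pow_sub_exp_le (x : ℝ) (n : ℕ) :
    |((2 + cos x) / 3) ^ n - exp (-(n * x ^ 2 / 6))| ≤ n * x ^ 6 := by
  have hp : |(2 + cos x) / 3| ≤ 1 := by
    rw [abs_le]; constructor <;> linarith [neg_one_le_cos x, cos_le_one x]
  have hq : |exp (-(x ^ 2 / 6))| ≤ 1 := by
    rw [abs_of_pos (exp_pos _), exp_le_one_iff]; nlinarith [sq_nonneg x]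
  have hpow : exp (-(n * x ^ 2 / 6)) = exp (-(x ^ 2 / 6)) ^ n := by
    rw [← exp_nat_mul]; ring_nf
  rw [hpow]
  exact (abs_pow_sub_pow_le_of_abs_le_one hp hq n).trans
    (mul_le_mul_of_nonneg_left (abs_two_add_cos_div_three_sub_exp_le x) n.cast_nonneg)

theorem chernoff_heat_second_sin_rate_general (a t : ℝ) (ht : 0 < t) :
    ∃ C : ℝ, 0 ≤ C ∧ ∀ n : ℕ, 0 < n →
      |(1 / 3 ^ n) * (2 + Real.cos (a * Real.sqrt (6 * t / n))) ^ n
          - Real.exp (-(a ^ 2) * t)|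
        ≤ C / (n : ℝ) ^ 2 := by
  refine ⟨216 * (a ^ 2 * t) ^ 3, by positivity, fun n hn => ?_⟩
  have hn0 : (n : ℝ) ≠ 0 := by positivity
  set x := a * √(6 * t / n)
  have hx2 : x ^ 2 = 6 * (a ^ 2 * t) / n := by
    rw [mul_pow, sq_sqrt (by positivity)]; ring
  have hchernoff : 1 / 3 ^ n * (2 + cos x) ^ n = ((2 + cos x) / 3) ^ n := by
    rw [div_pow]; ring
  have hexp : exp (-(a ^ 2) * t) = exp (-(n * x ^ 2 / 6)) := by
    rw [hx2]; field_simp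
  calc |1 / 3 ^ n * (2 + cos x) ^ n - exp (-(a ^ 2) * t)| ≤ n * x ^ 6 := by
        rw [hchernoff, hexp]; exact abs_two_add_cos_div_three_pow_sub_exp_le x n
    _ = 216 * (a ^ 2 * t) ^ 3 / n ^ 2 := by
        rw [show x ^ 6 = (x ^ 2) ^ 3 by ring, hx2]; field_simp; ring

theorem chernoff_heat_second_sin_rate (a t : ℝ) (ha : 0 < a) (ht : 0 < t) :
    ∃ C : ℝ, 0 ≤ C ∧ ∀ n : ℕ, 0 < n →
      |(1 / 3 ^ n) * (2 + Real.cos (a * Real.sqrt (6 * t / n))) ^ n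
          - Real.exp (-(a ^ 2) * t)|
        ≤ C / (n : ℝ) ^ 2 :=
  chernoff_heat_second_sin_rate_general a t ht
end

section
/- Let t > 0 and for x ∈ ℝ set u(t,x) = ∫_{ℝ} (1/(2√(πt)))·exp(−(x − y)²/(4t))·e^{−|y|} dy. Then u(t,x) is asymptotically equivalent to e^{t−x} as x → +∞; that is, u(t,x)/e^{t−x} → 1 as x → +∞. -/
open Real MeasureTheory Filter

open Set Topology

private noncomputable def gphi (t z : ℝ) : ℝ :=
  (1 / (2 * Real.sqrt (π * t))) * Real.exp (-(z ^ 2) / (4 * t))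

private lemma gphi_nonneg (t z : ℝ) : 0 ≤ gphi t z := by unfold gphi; positivity

private lemma gphi_eq (t : ℝ) (ht : 0 < t) :
    gphi t = fun z => (1 / (2 * Real.sqrt (π * t))) * Real.exp (-(1/(4*t)) * z ^ 2) := by
  funext z; unfold gphi; congr 1; · congr 1; field_simp

private lemma gphi_integrable (t : ℝ) (ht : 0 < t) : Integrable (gphi t) := by
  rw [gphi_eq t ht]
  exact (integrable_exp_neg_mul_sq (by positivity)).const_mul _

private lemma gphi_integral (t : ℝ) (ht : 0 < t) : ∫ z, gphi t z = 1 := by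
  rw [gphi_eq t ht]
  rw [integral_const_mul, integral_gaussian]
  rw [show π / (1/(4*t)) = 2^2 * (π * t) by field_simp; ring]
  rw [Real.sqrt_mul (by norm_num : (0:ℝ) ≤ 2^2), Real.sqrt_sq (by norm_num : (0:ℝ) ≤ 2)]
  have hs : 0 < Real.sqrt (π * t) := Real.sqrt_pos.mpr (by positivity)
  field_simp

private lemma point_Ioi (t : ℝ) (ht : 0 < t) (x y : ℝ) (hy : 0 ≤ y) :
    (1 / (2 * Real.sqrt (π * t))) * Real.exp (-((x - y) ^ 2) / (4 * t)) * Real.exp (-|y|)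
      = Real.exp (t - x) * gphi t (y - (x - 2*t)) := by
  have h4t : (4:ℝ) * t ≠ 0 := by positivity
  rw [abs_of_nonneg hy]
  simp only [gphi]
  rw [mul_assoc, ← Real.exp_add,
    show -((x - y) ^ 2) / (4 * t) + -y
        = (t - x) + (-((y - (x - 2*t)) ^ 2) / (4 * t)) by field_simp; ring,
    Real.exp_add]
  ring

private lemma point_Iic (t : ℝ) (ht : 0 < t) (x y : ℝ) (hy : y ≤ 0) :
    (1 / (2 * Real.sqrt (π * t))) * Real.exp (-((x - y) ^ 2) / (4 * t)) * Real.exp (-|y|)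
      = Real.exp (t + x) * gphi t (y - (x + 2*t)) := by
  have h4t : (4:ℝ) * t ≠ 0 := by positivity
  rw [abs_of_nonpos hy]
  simp only [gphi]
  rw [mul_assoc, ← Real.exp_add,
    show -((x - y) ^ 2) / (4 * t) + -(-y)
        = (t + x) + (-((y - (x + 2*t)) ^ 2) / (4 * t)) by field_simp; ring,
    Real.exp_add]
  ring

private lemma shift_Ioi (f : ℝ → ℝ) (m : ℝ) :
    ∫ y in Ioi (0:ℝ), f (y - m) = ∫ z in Ioi (-m), f z := by
  have h := (measurePreserving_sub_right (volume : Measure ℝ) m).setIntegral_preimage_emb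
    (MeasurableEquiv.subRight m).measurableEmbedding f (Ioi (-m))
  rw [show (· - m) ⁻¹' (Ioi (-m)) = Ioi (0:ℝ) by rw [preimage_sub_const_Ioi]; simp] at h
  exact h

theorem heat_semigroup_exp_abs_asymptotic (t : ℝ) (ht : 0 < t) :
    Filter.Tendsto
      (fun x : ℝ =>
        (∫ y : ℝ, (1 / (2 * Real.sqrt (π * t)))
            * Real.exp (-((x - y) ^ 2) / (4 * t)) * Real.exp (-|y|))
          / Real.exp (t - x))
      Filter.atTop (nhds 1) := by
  have hgc : Continuous (gphi t) := by
    unfold gphi; fun_prop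
  have hshift : ∀ m : ℝ, Integrable (fun y => gphi t (y - m)) :=
    fun m => (gphi_integrable t ht).comp_sub_right m
  have hint : ∀ x : ℝ, Integrable (fun y : ℝ =>
      (1 / (2 * Real.sqrt (π * t))) * Real.exp (-((x - y) ^ 2) / (4 * t)) * Real.exp (-|y|)) := by
    intro x
    refine (hshift x).mono ((Continuous.aestronglyMeasurable (by continuity))) (Eventually.of_forall fun y => ?_)
    rw [Real.norm_eq_abs, Real.norm_eq_abs, abs_of_nonneg (by positivity),
      abs_of_nonneg (gphi_nonneg t _)]
    have h1 : gphi t (y - x)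
        = (1 / (2 * Real.sqrt (π * t))) * Real.exp (-((x - y) ^ 2) / (4 * t)) := by
      simp only [gphi]; congr 2; ring
    rw [h1]
    exact mul_le_of_le_one_right (by positivity)
      (Real.exp_le_one_iff.mpr (neg_nonpos.mpr (abs_nonneg y)))
  have hdecomp : ∀ x : ℝ,
      (∫ y : ℝ, (1 / (2 * Real.sqrt (π * t)))
          * Real.exp (-((x - y) ^ 2) / (4 * t)) * Real.exp (-|y|))
        = Real.exp (t + x) * (∫ y in Iic (0:ℝ), gphi t (y - (x + 2*t)))
          + Real.exp (t - x) * (∫ z in Ioi (2*t - x), gphi t z) := by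
    intro x
    rw [← intervalIntegral.integral_Iic_add_Ioi (b := (0:ℝ)) ((hint x).integrableOn) ((hint x).integrableOn)]
    congr 1
    · rw [setIntegral_congr_fun measurableSet_Iic (fun y hy => point_Iic t ht x y hy)]
      exact integral_const_mul _ _
    · rw [setIntegral_congr_fun measurableSet_Ioi (fun y hy => point_Ioi t ht x y (le_of_lt hy))]
      rw [integral_const_mul, shift_Ioi (gphi t) (x - 2*t),
        show -(x - 2*t) = 2*t - x by ring]
  -- A tendsto 1
  have hA : Tendsto (fun x => ∫ z in Ioi (2*t - x), gphi t z) atTop (𝓝 1) := by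
    have hdc := tendsto_integral_filter_of_dominated_convergence (μ := (volume : Measure ℝ)) (l := (atTop : Filter ℝ))
      (F := fun x : ℝ => Set.indicator (Ioi (2*t - x)) (gphi t)) (f := gphi t) (bound := gphi t)
      (Eventually.of_forall fun x =>
        (hgc.measurable.indicator measurableSet_Ioi).aestronglyMeasurable)
      (Eventually.of_forall fun x => Eventually.of_forall fun z => by
        calc ‖Set.indicator (Ioi (2*t - x)) (gphi t) z‖
            ≤ ‖gphi t z‖ := norm_indicator_le_norm_self _ _
          _ = gphi t z := by rw [Real.norm_eq_abs, abs_of_nonneg (gphi_nonneg t z)])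
      (gphi_integrable t ht)
      (Eventually.of_forall fun z => by
        refine Tendsto.congr' ?_ tendsto_const_nhds
        filter_upwards [eventually_gt_atTop (2*t - z)] with x hx
        exact (Set.indicator_of_mem (by simp only [mem_Ioi]; linarith) _).symm)
    rw [gphi_integral t ht] at hdc
    exact hdc.congr fun x => integral_indicator measurableSet_Ioi
  -- B bound
  have hBpos : ∀ x : ℝ, 0 ≤ ∫ y in Iic (0:ℝ), gphi t (y - (x + 2*t)) :=
    fun x => setIntegral_nonneg measurableSet_Iic fun y _ => gphi_nonneg t _
  have hKint : Integrable (fun z : ℝ => Real.exp (-(1/(8*t)) * z ^ 2)) :=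
    integrable_exp_neg_mul_sq (by positivity)
  set K := ∫ z : ℝ, Real.exp (-(1/(8*t)) * z ^ 2) with hK
  set c := 1 / (2 * Real.sqrt (π * t)) with hc
  have hc0 : 0 ≤ c := by positivity
  have hK0 : 0 ≤ K := integral_nonneg fun z => (Real.exp_pos _).le
  have hBbound : ∀ x : ℝ, 0 ≤ x →
      (∫ y in Iic (0:ℝ), gphi t (y - (x + 2*t)))
        ≤ c * Real.exp (-(x + 2*t)^2 / (8*t)) * K := by
    intro x hx
    set m := x + 2*t with hm
    have hmpos : 0 < m := by positivity
    have step1 : (∫ y in Iic (0:ℝ), gphi t (y - m))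
        ≤ ∫ y in Iic (0:ℝ), c * Real.exp (-m^2/(8*t))
            * Real.exp (-(1/(8*t)) * (y - m) ^ 2) := by
      refine setIntegral_mono_on ((hshift m).integrableOn)
        (((hKint.comp_sub_right m).const_mul _).integrableOn) measurableSet_Iic ?_
      intro y hy
      simp only [gphi, ← hc]
      rw [mul_assoc, ← Real.exp_add]
      refine mul_le_mul_of_nonneg_left (Real.exp_le_exp.mpr ?_) hc0
      have h1 : m^2 ≤ (y - m)^2 := by nlinarith [mem_Iic.mp hy]
      rw [show -((y - m)^2)/(4*t) = (-2*(y - m)^2)/(8*t) by ring,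
        show -m^2/(8*t) + -(1/(8*t)) * (y - m)^2 = (-m^2 - (y - m)^2)/(8*t) by ring]
      exact div_le_div_of_nonneg_right (by nlinarith) (by positivity)
    calc (∫ y in Iic (0:ℝ), gphi t (y - m)) ≤ _ := step1
      _ = c * Real.exp (-m^2/(8*t)) * ∫ y in Iic (0:ℝ), Real.exp (-(1/(8*t)) * (y - m) ^ 2) :=
          integral_const_mul _ _
      _ ≤ c * Real.exp (-m^2/(8*t)) * ∫ y : ℝ, Real.exp (-(1/(8*t)) * (y - m) ^ 2) := by
          refine mul_le_mul_of_nonneg_left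
            (setIntegral_le_integral (hKint.comp_sub_right m)
              (Eventually.of_forall fun y => (Real.exp_pos _).le)) (by positivity)
      _ = c * Real.exp (-m^2/(8*t)) * K := by
          rw [show (∫ y : ℝ, Real.exp (-(1/(8*t)) * (y - m) ^ 2))
              = ∫ z : ℝ, Real.exp (-(1/(8*t)) * z ^ 2) from
            integral_sub_right_eq_self (fun z => Real.exp (-(1/(8*t)) * z ^ 2)) m]
      _ = c * Real.exp (-m^2 / (8*t)) * K := by ring_nf
  -- exp(2x) * B tendsto 0
  have hg0 : Tendsto (fun x : ℝ => (c*K) * Real.exp (2*x - (x+2*t)^2/(8*t))) atTop (𝓝 0) := by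
    have hb : Tendsto (fun x : ℝ => 2*x - (x+2*t)^2/(8*t)) atTop atBot := by
      refine tendsto_atBot_mono' atTop ?_ tendsto_neg_atTop_atBot
      filter_upwards [eventually_ge_atTop (24*t), eventually_ge_atTop (0:ℝ)] with x h1 h2
      have h3 : 24*t*x ≤ (x+2*t)^2 := by nlinarith
      have h4 : 3*x ≤ (x+2*t)^2/(8*t) := by rw [le_div_iff₀ (by positivity)]; nlinarith
      linarith
    have := (Real.tendsto_exp_atBot.comp hb).const_mul (c*K)
    simpa using this
  have hB : Tendsto (fun x : ℝ => Real.exp (2*x)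
      * ∫ y in Iic (0:ℝ), gphi t (y - (x + 2*t))) atTop (𝓝 0) := by
    refine squeeze_zero' (Eventually.of_forall fun x =>
      mul_nonneg (Real.exp_pos _).le (hBpos x)) ?_ hg0
    filter_upwards [eventually_ge_atTop (0:ℝ)] with x hx
    calc Real.exp (2*x) * ∫ y in Iic (0:ℝ), gphi t (y - (x + 2*t))
        ≤ Real.exp (2*x) * (c * Real.exp (-(x + 2*t)^2 / (8*t)) * K) :=
          mul_le_mul_of_nonneg_left (hBbound x hx) (Real.exp_pos _).le
      _ = (c*K) * (Real.exp (2*x) * Real.exp (-(x+2*t)^2/(8*t))) := by ring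
      _ = (c*K) * Real.exp (2*x - (x+2*t)^2/(8*t)) := by
          rw [← Real.exp_add]; ring_nf
  -- final assembly
  have hfinal : ∀ x : ℝ,
      (∫ y : ℝ, (1 / (2 * Real.sqrt (π * t)))
          * Real.exp (-((x - y) ^ 2) / (4 * t)) * Real.exp (-|y|)) / Real.exp (t - x)
        = (∫ z in Ioi (2*t - x), gphi t z)
          + Real.exp (2*x) * ∫ y in Iic (0:ℝ), gphi t (y - (x + 2*t)) := by
    intro x
    have h1 : Real.exp (t + x) = Real.exp (t - x) * Real.exp (2*x) := by
      rw [← Real.exp_add]; ring_nf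
    rw [hdecomp x, h1, div_eq_iff (Real.exp_ne_zero _)]
    ring
  refine Tendsto.congr (fun x => (hfinal x).symm) ?_
  simpa using hA.add hB
end
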